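/- arXiv:2506.11905 — 5 statements merged into one kernel-verified Lean document; each statement's English description precedes it below -/
import Mathlib

section
/- A finite group G is ambivalent if and only if every irreducible finite-dimensional complex representation of G has real-valued character; that is, for every simple object V of the category FDRep ℂ G and every g in G, the character value χ_V(g) is a real number. -/
open CategoryTheory

/-- A group `G` is *ambivalent* if every element is conjugate to its inverse. -/
def IsAmbivalent (G : Type*) [Group G] : Prop :=
  ∀ g : G, ∃ h : G, h * g * h⁻¹ = g⁻¹

section Auxiliary

open LinearMap Module

lemma trace_inv_eq_conj_trace' {W : Type*} [AddCommGroup W] [Module ℂ W] [FiniteDimensional ℂ W]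
    (f g : Module.End ℂ W) (hfg : f * g = 1) (hgf : g * f = 1)
    {k : ℕ} (hk : k ≠ 0) (hfk : f ^ k = 1) :
    trace ℂ W g = starRingEnd ℂ (trace ℂ W f) := by
  classical
  have hcomm : Commute f g := by unfold Commute SemiconjBy; rw [hfg, hgf]
  have hN_fin : {μ : ℂ | f.maxGenEigenspace μ ≠ ⊥}.Finite :=
    WellFoundedGT.finite_ne_bot_of_iSupIndep f.independent_maxGenEigenspace
  have hInt : DirectSum.IsInternal (fun μ : ℂ => f.maxGenEigenspace μ) :=
    DirectSum.isInternal_submodule_of_iSupIndep_of_iSup_eq_top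
      f.independent_maxGenEigenspace (Module.End.iSup_maxGenEigenspace_eq_top f)
  have hmapf : ∀ μ : ℂ, Set.MapsTo f (f.maxGenEigenspace μ) (f.maxGenEigenspace μ) :=
    fun μ => Module.End.mapsTo_maxGenEigenspace_of_comm rfl μ
  have hmapg : ∀ μ : ℂ, Set.MapsTo g (f.maxGenEigenspace μ) (f.maxGenEigenspace μ) :=
    fun μ => Module.End.mapsTo_maxGenEigenspace_of_comm hcomm μ
  rw [trace_eq_sum_trace_restrict' hInt hN_fin hmapg,
      trace_eq_sum_trace_restrict' hInt hN_fin hmapf, map_sum]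
  apply Finset.sum_congr rfl
  intro μ hμ
  rw [Set.Finite.mem_toFinset] at hμ
  -- μ is an eigenvalue of f, and μ ^ k = 1
  have hev : f.HasEigenvalue μ :=
    (Module.End.hasUnifEigenvalue_iff_hasUnifEigenvalue_one (by norm_num)).mp hμ
  obtain ⟨v, hv⟩ := hev.exists_hasEigenvector
  have hμk : μ ^ k = 1 := by
    have h1 : (f ^ k) v = μ ^ k • v := hv.pow_apply k
    rw [hfk] at h1
    have h2 : (μ ^ k - 1) • v = 0 := by
      rw [sub_smul, one_smul, ← h1]; simp
    rcases smul_eq_zero.mp h2 with h | h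
    · exact sub_eq_zero.mp h
    · exact absurd h hv.2
  have hμ0 : μ ≠ 0 := by
    rintro rfl
    rw [zero_pow hk] at hμk
    exact zero_ne_one hμk
  have hconj : starRingEnd ℂ μ = μ⁻¹ := by
    have hnorm : ‖μ‖ = 1 := by
      have : ‖μ‖ ^ k = 1 := by rw [← norm_pow, hμk, norm_one]
      exact (pow_left_strictMonoOn₀ hk).injOn (norm_nonneg μ) (by norm_num)
        (by rw [this, one_pow])
    apply eq_inv_of_mul_eq_one_left
    rw [mul_comm, Complex.mul_conj]
    norm_cast
    rw [Complex.normSq_eq_norm_sq, hnorm, one_pow]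
  -- now the trace computation on the generalized eigenspace
  set E := f.maxGenEigenspace μ with hE
  set F := f.restrict (hmapf μ) with hF
  set Gr := g.restrict (hmapg μ) with hGr
  have hGF : Gr * F = 1 := by
    ext x
    have h1 := LinearMap.congr_fun hgf (x : W)
    exact h1
  have hFG : F * Gr = 1 := by
    ext x
    have h1 := LinearMap.congr_fun hfg (x : W)
    exact h1
  have hNil : IsNilpotent (F - algebraMap ℂ (Module.End ℂ E) μ) := by
    have h1 := f.isNilpotent_restrict_maxGenEigenspace_sub_algebraMap μ
    have h2 : F - algebraMap ℂ (Module.End ℂ E) μ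
        = (f - algebraMap ℂ (Module.End ℂ W) μ).restrict
          (Module.End.mapsTo_maxGenEigenspace_of_comm
            (Algebra.mul_sub_algebraMap_commutes f μ) μ) := by
      ext x
      simp only [LinearMap.sub_apply, restrict_coe_apply, Submodule.coe_sub,
        Algebra.algebraMap_eq_smul_one, LinearMap.smul_apply, Module.End.one_apply,
        SetLike.val_smul]
      rfl
    rw [h2]; exact h1
  have hcommGF : Commute Gr (F - algebraMap ℂ (Module.End ℂ E) μ) := by
    apply Commute.sub_right
    · unfold Commute SemiconjBy; rw [hGF, hFG]
    · exact (Algebra.commutes μ Gr).symm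
  have key : Gr - algebraMap ℂ (Module.End ℂ E) μ⁻¹
      = (-μ⁻¹) • (Gr * (F - algebraMap ℂ (Module.End ℂ E) μ)) := by
    rw [mul_sub, hGF, Algebra.algebraMap_eq_smul_one, Algebra.algebraMap_eq_smul_one,
      mul_smul_comm, mul_one, smul_sub, smul_smul, neg_mul, inv_mul_cancel₀ hμ0]
    module
  have hNil2 : IsNilpotent (Gr - algebraMap ℂ (Module.End ℂ E) μ⁻¹) := by
    rw [key]
    exact (hcommGF.isNilpotent_mul_left hNil).smul _
  -- traces
  have htr : ∀ (h : Module.End ℂ E) (c : ℂ), IsNilpotent (h - algebraMap ℂ (Module.End ℂ E) c) →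
      trace ℂ E h = c * (finrank ℂ E : ℂ) := by
    intro h c hn
    have h0 : trace ℂ E (h - algebraMap ℂ (Module.End ℂ E) c) = 0 :=
      (isNilpotent_trace_of_isNilpotent hn).eq_zero
    rw [map_sub] at h0
    have h1 : trace ℂ E (algebraMap ℂ (Module.End ℂ E) c) = c * (finrank ℂ E : ℂ) := by
      rw [Algebra.algebraMap_eq_smul_one, map_smul, trace_one, smul_eq_mul]
    rw [sub_eq_zero] at h0
    rw [h0, h1]
  rw [htr F μ hNil, htr Gr μ⁻¹ hNil2, map_mul, hconj, map_natCast]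

section SimpleCriterion

variable {G : Type} [Group G] [Fintype G]

lemma fdRep_hom_comm_apply {Y V : FDRep ℂ G} (f : Y ⟶ V) (x : G) (v : Y) :
    f.hom (Y.ρ x v) = V.ρ x (f.hom v) :=
  LinearMap.congr_fun (congrArg (fun q => q.hom.hom) (f.comm x)) v

/-- Restriction of a representation to an invariant subspace. -/
noncomputable def subRep (Y : FDRep ℂ G) (U : Submodule ℂ Y) (hU : ∀ (x : G), ∀ v ∈ U, Y.ρ x v ∈ U) :
    Representation ℂ G U where
  toFun x := (Y.ρ x).restrict (hU x)
  map_one' := by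
    ext v
    simp [LinearMap.restrict_apply]
  map_mul' x y := by
    ext v
    simp [LinearMap.restrict_apply]

lemma simple_of_invariant_subspaces (V : FDRep ℂ G) (hnt : ∃ v : V, v ≠ 0)
    (hs : ∀ U : Submodule ℂ V, (∀ (x : G), ∀ v ∈ U, V.ρ x v ∈ U) → U = ⊥ ∨ U = ⊤) :
    Simple V := by
  constructor
  intro Y f hm
  constructor
  · intro hiso h0
    obtain ⟨v, hv⟩ := hnt
    have hid : (𝟙 V : V ⟶ V) = 0 := by
      have h2 : inv f ≫ f = inv f ≫ 0 := congrArg (fun q => inv f ≫ q) h0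
      simpa using h2
    apply hv
    have h1 : (𝟙 V : V ⟶ V).hom v = v := rfl
    have h2 : ((0 : V ⟶ V)).hom v = 0 := rfl
    rw [← h1, hid, h2]
  · intro hf0
    -- f.hom is injective
    have hinj : Function.Injective f.hom := by
      rw [← LinearMap.ker_eq_bot]
      by_contra hne
      obtain ⟨w, hw, hw0⟩ := Submodule.exists_mem_ne_zero_of_ne_bot hne
      have hinv : ∀ (x : G), ∀ v ∈ LinearMap.ker f.hom.hom.hom, Y.ρ x v ∈ LinearMap.ker f.hom.hom.hom := by
        intro x v hv
        rw [LinearMap.mem_ker] at hv ⊢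
        exact (fdRep_hom_comm_apply f x v).trans (by change V.ρ x (f.hom.hom.hom v) = 0; rw [hv, map_zero])
      let W : FDRep ℂ G := FDRep.of (subRep Y (LinearMap.ker f.hom.hom.hom) hinv)
      let i : W ⟶ Y := ⟨InducedCategory.Hom.mk (ModuleCat.ofHom (LinearMap.ker f.hom.hom.hom).subtype), fun x => rfl⟩
      have hiz : i ≫ f = 0 := by
        apply Action.Hom.ext
        apply FGModuleCat.hom_ext
        apply LinearMap.ext
        intro u
        exact u.2
      have hi0 : i = 0 := by
        rw [← CategoryTheory.cancel_mono f, hiz, Limits.zero_comp]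
      apply hw0
      have := congrArg (fun (φ : W ⟶ Y) => φ.hom ⟨w, hw⟩) hi0
      exact this
    have hsur : Function.Surjective f.hom := by
      rcases hs (LinearMap.range f.hom.hom.hom) (by
        intro x v hv
        obtain ⟨u, rfl⟩ := hv
        exact ⟨Y.ρ x u, (fdRep_hom_comm_apply f x u)⟩) with h | h
      · exfalso
        apply hf0
        apply Action.Hom.ext
        apply FGModuleCat.hom_ext
        apply LinearMap.ext
        intro u
        have : f.hom.hom.hom u ∈ (⊥ : Submodule ℂ V) := h ▸ LinearMap.mem_range_self f.hom.hom.hom u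
        simpa using this
      · rw [← LinearMap.range_eq_top]; exact h
    let e : (Y : Type) ≃ₗ[ℂ] (V : Type) := LinearEquiv.ofBijective f.hom.hom.hom ⟨hinj, hsur⟩
    have h1 : ∀ u : (V : Type), f.hom (e.symm u) = u := fun u => e.apply_symm_apply u
    let gh : V.V ⟶ Y.V := InducedCategory.Hom.mk (ModuleCat.ofHom e.symm.toLinearMap)
    have hcomm : ∀ x : G, Action.ρ V x ≫ gh = gh ≫ Action.ρ Y x := by
      intro x
      apply FGModuleCat.hom_ext
      apply LinearMap.ext
      intro v
      apply hinj
      change f.hom (e.symm (V.ρ x v)) = f.hom (Y.ρ x (e.symm v))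
      rw [fdRep_hom_comm_apply f x (e.symm v)]
      rw [h1, h1]
    let ginv : V ⟶ Y := ⟨gh, hcomm⟩
    refine ⟨⟨ginv, ?_, ?_⟩⟩
    · apply Action.Hom.ext
      apply FGModuleCat.hom_ext
      apply LinearMap.ext
      intro u
      change e.symm (f.hom u) = u
      exact e.symm_apply_apply u
    · apply Action.Hom.ext
      apply FGModuleCat.hom_ext
      apply LinearMap.ext
      intro v
      change f.hom (e.symm v) = v
      exact e.apply_symm_apply v

end SimpleCriterion

section Span

variable {G : Type} [Group G] [Fintype G]

noncomputable instance : FiniteDimensional ℂ (MonoidAlgebra ℂ G) :=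
  Module.Finite.equiv ((Finsupp.linearEquivFunOnFinite ℂ ℂ G).symm.trans (MonoidAlgebra.coeffLinearEquiv ℂ).symm)

lemma span_class_fn_zero (h : G → ℂ)
    (hcl : ∀ x y : G, h (y * x * y⁻¹) = h x)
    (hor : ∀ V : FDRep ℂ G, Simple V → ∑ x : G, h x * FDRep.character V x = 0) :
    ∀ y : G, h y = 0 := by
  classical
  haveI : NeZero ((Fintype.card G : ℂ)) := ⟨Nat.cast_ne_zero.mpr Fintype.card_ne_zero⟩
  set a : MonoidAlgebra ℂ G := ∑ x : G, h x • MonoidAlgebra.single x (1:ℂ) with ha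
  have heval : ∀ y : G, a.coeff y = h y := by
    intro y
    rw [ha, MonoidAlgebra.coeff_sum, Finsupp.finset_sum_apply]
    simp [Finsupp.single_apply]
  -- centrality against group elements
  have hcen : ∀ y : G, a * MonoidAlgebra.single y (1:ℂ) = MonoidAlgebra.single y 1 * a := by
    intro y
    rw [ha, Finset.sum_mul, Finset.mul_sum]
    apply Fintype.sum_equiv ⟨fun x => y⁻¹ * x * y, fun x => y * x * y⁻¹,
      fun x => by group, fun x => by group⟩
    intro x
    simp only [Equiv.coe_fn_mk, smul_mul_assoc, mul_smul_comm,
      MonoidAlgebra.single_mul_single, one_mul, mul_one]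
    have hx : h (y⁻¹ * x * y) = h x := by
      have := hcl x y⁻¹
      simpa using this
    rw [hx]
    congr 1
    group
  have hcen' : ∀ b : MonoidAlgebra ℂ G, a * b = b * a := by
    intro b
    induction b using MonoidAlgebra.induction_on with
    | of y => exact hcen y
    | add f g hf hg => rw [mul_add, add_mul, hf, hg]
    | smul r f hf => rw [mul_smul_comm, smul_mul_assoc, hf]
  have hmul : ∀ w : MonoidAlgebra ℂ G,
      a * w = ∑ x : G, h x • (MonoidAlgebra.single x (1:ℂ) * w) := by
    intro w
    rw [ha, Finset.sum_mul]
    exact Finset.sum_congr rfl fun x _ => smul_mul_assoc _ _ _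
  -- every simple submodule is killed by a
  have hsimple : ∀ S : Submodule (MonoidAlgebra ℂ G) (MonoidAlgebra ℂ G),
      IsSimpleModule (MonoidAlgebra ℂ G) S → ∀ s ∈ S, a * s = 0 := by
    intro S hSimp s hs
    haveI := hSimp
    set T : Submodule ℂ (MonoidAlgebra ℂ G) := S.restrictScalars ℂ with hT
    have hmaps : ∀ x : G, ∀ v ∈ T, (MonoidAlgebra.single x (1:ℂ)) * v ∈ T := by
      intro x v hv
      have h1 : (MonoidAlgebra.single x (1:ℂ)) • v ∈ S := S.smul_mem _ hv
      simpa [smul_eq_mul, hT] using h1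
    let ρS : Representation ℂ G T :=
      { toFun := fun x => (LinearMap.mulLeft ℂ (MonoidAlgebra.single x (1:ℂ))).restrict
          (fun v hv => hmaps x v hv)
        map_one' := by
          ext v
          simp [LinearMap.restrict_apply, ← MonoidAlgebra.one_def]
        map_mul' := fun x y => by
          apply LinearMap.ext; intro v; apply Subtype.ext
          change MonoidAlgebra.single (x * y) (1:ℂ) * (v : MonoidAlgebra ℂ G) = MonoidAlgebra.single x 1 * (MonoidAlgebra.single y 1 * (v : MonoidAlgebra ℂ G))
          rw [← mul_assoc, MonoidAlgebra.single_mul_single, mul_one] }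
    have hρS : ∀ (x : G) (v : T), ((ρS x v : T) : MonoidAlgebra ℂ G)
        = MonoidAlgebra.single x (1:ℂ) * (v : MonoidAlgebra ℂ G) := fun x v => rfl
    let V : FDRep ℂ G := FDRep.of ρS
    haveI hntT : Nontrivial T := IsSimpleModule.nontrivial (MonoidAlgebra ℂ G) S
    -- V is simple
    haveI hVsimple : Simple V := by
      apply simple_of_invariant_subspaces
      · obtain ⟨v, hv⟩ := exists_ne (0 : T)
        exact ⟨v, hv⟩
      · intro U hU
        -- build the corresponding A-submodule of S
        let ι : S → T := fun u => ⟨u.1, u.2⟩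
        let U' : Submodule (MonoidAlgebra ℂ G) S :=
          { carrier := {u : S | ι u ∈ U}
            add_mem' := fun {u} {v} hu hv => by
              have : ι (u + v) = ι u + ι v := rfl
              simp only [Set.mem_setOf_eq, this]
              exact U.add_mem hu hv
            zero_mem' := by
              have : ι 0 = 0 := rfl
              simp only [Set.mem_setOf_eq, this]
              exact U.zero_mem
            smul_mem' := by
              intro c u hu
              simp only [Set.mem_setOf_eq] at hu ⊢
              induction c using MonoidAlgebra.induction_on with
              | of y =>
                exact hU y (ι u) hu
              | add f g hf hg =>
                have : ι ((f + g) • u) = ι (f • u) + ι (g • u) := by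
                  apply Subtype.ext
                  simp [add_smul]
                  rfl
                rw [this]
                exact U.add_mem hf hg
              | smul r f hf =>
                have : ι ((r • f) • u) = r • ι (f • u) := by
                  apply Subtype.ext
                  simp [smul_assoc]
                  rfl
                rw [this]
                exact U.smul_mem r hf
          }
        rcases eq_bot_or_eq_top U' with h' | h'
        · left
          rw [eq_bot_iff]
          intro v hv
          have hv' : (⟨v.1, v.2⟩ : S) ∈ U' := by
            show ι ⟨v.1, v.2⟩ ∈ U
            convert hv
          rw [h'] at hv'
          have : (⟨v.1, v.2⟩ : S) = 0 := hv'
          have hval : v.1 = 0 := congrArg Subtype.val this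
          show v ∈ (⊥ : Submodule ℂ T)
          rw [Submodule.mem_bot]
          exact Subtype.ext hval
        · right
          rw [eq_top_iff]
          intro v _
          have hv' : (⟨v.1, v.2⟩ : S) ∈ U' := h' ▸ trivial
          have : ι ⟨v.1, v.2⟩ ∈ U := hv'
          convert this
    -- the averaging endomorphism
    let Φh : T →ₗ[ℂ] T := ∑ x : G, h x • ρS x
    have hΦcoe : ∀ v : T, ((Φh v : T) : MonoidAlgebra ℂ G) = a * (v : MonoidAlgebra ℂ G) := by
      intro v
      rw [hmul]
      show T.subtype (Φh v) = _
      have h1 : Φh v = ∑ x : G, h x • (ρS x v) := by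
        show (∑ x : G, h x • ρS x) v = _
        rw [LinearMap.sum_apply]
        exact Finset.sum_congr rfl fun x _ => rfl
      rw [h1, map_sum]
      refine Finset.sum_congr rfl fun x _ => ?_
      rw [map_smul]
      show h x • ((ρS x v : T) : MonoidAlgebra ℂ G) = _
      rw [hρS]
    let gh : V.V ⟶ V.V := InducedCategory.Hom.mk (ModuleCat.ofHom Φh)
    have hghcomm : ∀ x : G, Action.ρ V x ≫ gh = gh ≫ Action.ρ V x := by
      intro x
      apply FGModuleCat.hom_ext
      apply LinearMap.ext
      intro v
      apply Subtype.ext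
      show ((Φh (ρS x v) : T) : MonoidAlgebra ℂ G) = ((ρS x (Φh v) : T) : MonoidAlgebra ℂ G)
      rw [hΦcoe, hρS, hρS, hΦcoe, ← mul_assoc, ← mul_assoc, hcen x]
    let Φ : V ⟶ V := ⟨gh, hghcomm⟩
    have htr : LinearMap.trace ℂ T Φh = ∑ x : G, h x * FDRep.character V x := by
      show LinearMap.trace ℂ T (∑ x : G, h x • ρS x) = _
      rw [map_sum]
      refine Finset.sum_congr rfl fun x _ => ?_
      rw [map_smul, smul_eq_mul]
      rfl
    have h0 : LinearMap.trace ℂ T Φh = 0 := htr.trans (hor V hVsimple)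
    have hdim : finrank ℂ (V ⟶ V) = 1 := by
      rw [FDRep.finrank_hom_simple_simple V V, if_pos ⟨Iso.refl V⟩]
    obtain ⟨v0, hv0, hspan⟩ := finrank_eq_one_iff'.mp hdim
    obtain ⟨c1, hc1⟩ := hspan Φ
    obtain ⟨c2, hc2⟩ := hspan (𝟙 V)
    have hid_ne : (𝟙 V : V ⟶ V) ≠ 0 := by
      intro hz
      obtain ⟨v, hv⟩ := exists_ne (0 : T)
      apply hv
      have h1 : (𝟙 V : V ⟶ V).hom v = v := rfl
      rw [hz] at h1
      exact h1.symm
    have hc2ne : c2 ≠ 0 := by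
      rintro rfl
      rw [zero_smul] at hc2
      exact hid_ne hc2.symm
    have hΦ : Φ = (c1 * c2⁻¹) • (𝟙 V) := by
      rw [← hc1, ← hc2, smul_smul, mul_assoc, inv_mul_cancel₀ hc2ne, mul_one]
    have htrc : LinearMap.trace ℂ T Φh = (c1 * c2⁻¹) * (finrank ℂ T : ℂ) := by
      have hhom : Φh = (c1 * c2⁻¹) • (LinearMap.id : T →ₗ[ℂ] T) := by
        have h2 := congrArg (fun (ψ : V ⟶ V) => ψ.hom.hom.hom) hΦ
        simp only [Action.smul_hom] at h2
        exact h2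
      rw [hhom, map_smul, trace_id, smul_eq_mul]
    have hc0 : c1 * c2⁻¹ = 0 := by
      rw [htrc] at h0
      refine (mul_eq_zero.mp h0).resolve_right ?_
      exact Nat.cast_ne_zero.mpr (finrank_pos (R := ℂ) (M := T)).ne'
    have hΦ0 : Φ = 0 := by rw [hΦ, hc0, zero_smul]
    have hzero : Φh ⟨s, hs⟩ = 0 := by
      have h3 := congrArg (fun (ψ : V ⟶ V) => ψ.hom ⟨s, hs⟩) hΦ0
      exact h3
    have h4 := hΦcoe ⟨s, hs⟩
    rw [hzero] at h4
    simpa using h4.symm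
  -- conclude a = 0
  have hP : ∀ m : MonoidAlgebra ℂ G, a * m = 0 := by
    let P : Submodule (MonoidAlgebra ℂ G) (MonoidAlgebra ℂ G) :=
      { carrier := {m | a * m = 0}
        add_mem' := fun {u} {v} hu hv => by
          simp only [Set.mem_setOf_eq] at *
          rw [mul_add, hu, hv, add_zero]
        zero_mem' := by simp
        smul_mem' := by
          intro b m hm
          simp only [Set.mem_setOf_eq] at *
          rw [smul_eq_mul, ← mul_assoc, hcen' b, mul_assoc, hm, mul_zero] }
    have htop : ⊤ ≤ P := by
      rw [← IsSemisimpleModule.sSup_simples_eq_top (MonoidAlgebra ℂ G) (MonoidAlgebra ℂ G)]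
      apply sSup_le
      intro S hS
      intro s hs
      exact hsimple S hS s hs
    intro m
    exact htop (Submodule.mem_top)
  have ha0 : a = 0 := by
    have := hP 1
    rwa [mul_one] at this
  intro y
  rw [← heval y, ha0, MonoidAlgebra.coeff_zero, Finsupp.zero_apply]

end Span


section CharInv

variable {G : Type} [Group G] [Fintype G]

lemma character_inv_eq_conj (V : FDRep ℂ G) (g : G) :
    FDRep.character V g⁻¹ = starRingEnd ℂ (FDRep.character V g) := by
  refine trace_inv_eq_conj_trace' (V.ρ g) (V.ρ g⁻¹) ?_ ?_
    (k := Fintype.card G) Fintype.card_ne_zero ?_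
  · rw [← map_mul, mul_inv_cancel, map_one]
  · rw [← map_mul, inv_mul_cancel, map_one]
  · rw [← map_pow, pow_card_eq_one, map_one]

end CharInv

end Auxiliary

/-- A finite group `G` is ambivalent if and only if every irreducible finite-dimensional
complex representation of `G` has real-valued character. -/
theorem isAmbivalent_iff_character_real (G : Type) [Group G] [Fintype G] :
    IsAmbivalent G ↔
      ∀ (V : FDRep ℂ G), Simple V → ∀ g : G, ∃ r : ℝ, FDRep.character V g = (r : ℂ) := by
  classical
  constructor
  · intro hamb V _ g
    obtain ⟨t, ht⟩ := hamb g
    have h1 : FDRep.character V g⁻¹ = starRingEnd ℂ (FDRep.character V g) :=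
      character_inv_eq_conj V g
    have h2 : FDRep.character V g⁻¹ = FDRep.character V g := by
      rw [← ht, FDRep.char_conj]
    refine ⟨(FDRep.character V g).re, ?_⟩
    have h3 : starRingEnd ℂ (FDRep.character V g) = FDRep.character V g := by rw [← h1, h2]
    exact (Complex.conj_eq_iff_re.mp h3).symm
  · intro hreal g
    by_contra hcon
    push_neg at hcon
    set c : G → ℂ := fun x => if ∃ t : G, t * g * t⁻¹ = x then 1 else 0 with hc
    have hccl : ∀ x y : G, c (y * x * y⁻¹) = c x := by
      intro x y
      have hiff : (∃ t, t * g * t⁻¹ = y * x * y⁻¹) ↔ (∃ t, t * g * t⁻¹ = x) := by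
        constructor
        · rintro ⟨t, htx⟩
          refine ⟨y⁻¹ * t, ?_⟩
          have : y⁻¹ * (t * g * t⁻¹) * y = x := by rw [htx]; group
          rw [← this]; group
        · rintro ⟨t, htx⟩
          refine ⟨y * t, ?_⟩
          have : y * (t * g * t⁻¹) * y⁻¹ = y * x * y⁻¹ := by rw [htx]
          rw [← this]; group
      rw [hc]
      simp only
      rw [if_congr hiff rfl rfl]
    set hfun : G → ℂ := fun x => c x - c x⁻¹ with hf
    have hfcl : ∀ x y : G, hfun (y * x * y⁻¹) = hfun x := by
      intro x y
      rw [hf]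
      simp only
      have h1 : (y * x * y⁻¹)⁻¹ = y * x⁻¹ * y⁻¹ := by group
      rw [h1, hccl, hccl]
    have hforth : ∀ V : FDRep ℂ G, Simple V → ∑ x : G, hfun x * FDRep.character V x = 0 := by
      intro V hV
      have hchar : ∀ x : G, FDRep.character V x⁻¹ = FDRep.character V x := by
        intro x
        obtain ⟨r, hr⟩ := hreal V hV x
        rw [character_inv_eq_conj V x, hr]
        rw [Complex.conj_ofReal]
      have hsplit : ∑ x : G, hfun x * FDRep.character V x
          = ∑ x : G, c x * FDRep.character V x - ∑ x : G, c x⁻¹ * FDRep.character V x := by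
        rw [← Finset.sum_sub_distrib]
        refine Finset.sum_congr rfl fun x _ => ?_
        rw [hf]
        ring
      rw [hsplit]
      have hre : ∑ x : G, c x⁻¹ * FDRep.character V x = ∑ x : G, c x * FDRep.character V x := by
        apply Fintype.sum_equiv (Equiv.inv G)
        intro x
        show c x⁻¹ * FDRep.character V x = c x⁻¹ * FDRep.character V x⁻¹
        rw [hchar]
      rw [hre, sub_self]
    have hzero := span_class_fn_zero hfun hfcl hforth g
    rw [hf] at hzero
    simp only at hzero
    have hcg : c g = 1 := by
      rw [hc]
      simp only
      rw [if_pos ⟨1, by group⟩]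
    have hcginv : c g⁻¹ = 0 := by
      rw [hc]
      simp only
      rw [if_neg]
      rintro ⟨t, htx⟩
      exact hcon t htx
    rw [hcg, hcginv, sub_zero] at hzero
    exact one_ne_zero hzero
end

section
/- For every natural number n ≥ 1, the dicyclic group Dic_{2n} of order 8n is ambivalent: every element of QuaternionGroup (2*n) is conjugate to its inverse. -/
lemma QuaternionGroup.a_inv {m : ℕ} (i : ZMod (2 * m)) :
    (QuaternionGroup.a i)⁻¹ = QuaternionGroup.a (-i) := rfl

lemma QuaternionGroup.xa_inv {m : ℕ} (i : ZMod (2 * m)) :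
    (QuaternionGroup.xa i)⁻¹ = QuaternionGroup.xa ((m : ZMod (2 * m)) + i) := rfl

/-- For every `n ≥ 1`, the dicyclic group `Dic_{2n}` of order `8n` is ambivalent:
every element of `QuaternionGroup (2 * n)` is conjugate to its inverse. -/
theorem quaternionGroup_two_mul_isAmbivalent (n : ℕ) (hn : 1 ≤ n) :
    IsAmbivalent (QuaternionGroup (2 * n)) := by
  rintro (i | i)
  · refine ⟨QuaternionGroup.xa 0, ?_⟩
    rw [QuaternionGroup.xa_mul_a, QuaternionGroup.xa_inv, QuaternionGroup.a_inv,
      QuaternionGroup.xa_mul_xa]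
    congr 1
    have h4 : ((2 * (2 * n) : ℕ) : ZMod (2 * (2 * n))) = 0 := ZMod.natCast_self _
    push_cast at h4 ⊢
    linear_combination h4
  · refine ⟨QuaternionGroup.a (-(n : ZMod (2 * (2 * n)))), ?_⟩
    rw [QuaternionGroup.a_mul_xa, QuaternionGroup.a_inv, QuaternionGroup.xa_mul_a,
      QuaternionGroup.xa_inv]
    congr 1
    push_cast
    ring
end

section
/- For every odd natural number ℓ ≥ 1, the dicyclic group Dic_ℓ of order 4ℓ is not ambivalent; more precisely, there exists an element x of QuaternionGroup ℓ with orderOf x = 4 such that x is not conjugate to x⁻¹. -/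
/-- For every odd `ℓ ≥ 1`, the dicyclic group `Dic_ℓ` of order `4ℓ` is not ambivalent:
there is an element `x` of `QuaternionGroup ℓ` of order `4` that is not conjugate to its
inverse. -/
theorem quaternionGroup_odd_not_ambivalent (ℓ : ℕ) (h1 : 1 ≤ ℓ) (hodd : Odd ℓ) :
    ∃ x : QuaternionGroup ℓ, orderOf x = 4 ∧ ¬ ∃ h : QuaternionGroup ℓ, h * x * h⁻¹ = x⁻¹ := by
  haveI : NeZero ℓ := ⟨Nat.one_le_iff_ne_zero.mp h1⟩
  refine ⟨QuaternionGroup.xa 0, QuaternionGroup.orderOf_xa 0, ?_⟩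
  rintro ⟨h, hh⟩
  have key : ∀ i : ZMod (2 * ℓ), i + i ≠ (ℓ : ZMod (2 * ℓ)) := by
    intro i hi
    have := congrArg (ZMod.castHom (by omega : (2 : ℕ) ∣ 2 * ℓ) (ZMod 2)) hi
    simp only [map_add, map_natCast] at this
    have h2 : (ℓ : ZMod 2) = 1 := by
      conv_lhs => rw [← ZMod.natCast_mod ℓ 2, Nat.odd_iff.mp hodd, Nat.cast_one]
    rw [h2, CharTwo.add_self_eq_zero] at this
    exact zero_ne_one this
  have hinv : (QuaternionGroup.xa (0 : ZMod (2 * ℓ)))⁻¹ = QuaternionGroup.xa (ℓ : ZMod (2 * ℓ)) := by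
    rw [eq_comm, eq_inv_iff_mul_eq_one, QuaternionGroup.xa_mul_xa]
    have : ((ℓ : ZMod (2*ℓ)) + 0 - ℓ) = 0 := by ring
    rw [this]; rfl
  rw [hinv, mul_inv_eq_iff_eq_mul] at hh
  cases h with
  | a j =>
    rw [QuaternionGroup.a_mul_xa, QuaternionGroup.xa_mul_a] at hh
    have := QuaternionGroup.xa.injEq (0 - j) ((ℓ : ZMod (2*ℓ)) + j) ▸ hh
    have hj : (0 : ZMod (2*ℓ)) - j = (ℓ : ZMod (2*ℓ)) + j := by
      injection hh
    exact key (-j) (by linear_combination hj)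
  | xa j =>
    rw [QuaternionGroup.xa_mul_xa, QuaternionGroup.xa_mul_xa] at hh
    have hj : ((ℓ : ZMod (2*ℓ)) + 0 - j) = (ℓ : ZMod (2*ℓ)) + j - (ℓ : ZMod (2*ℓ)) := by
      injection hh
    exact key j (by linear_combination -hj)
end

section
/- For every natural number n ≥ 1, every irreducible complex character of the dicyclic group Dic_{2n} of order 8n is real-valued: for every simple object V of FDRep ℂ (QuaternionGroup (2*n)) and every group element g, the character value χ_V(g) is a real number. -/
open CategoryTheory

section Aux

open Polynomial Matrix

lemma aux_coeff_zero (s : Multiset ℂ) : ((s.map (fun c => 1 - C c * X)).prod).coeff 0 = 1 := by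
  induction s using Multiset.induction_on with
  | empty => simp
  | cons a s ih =>
    rw [Multiset.map_cons, Multiset.prod_cons, mul_coeff_zero, ih]
    simp

lemma aux_coeff_one (s : Multiset ℂ) : ((s.map (fun c => 1 - C c * X)).prod).coeff 1 = -s.sum := by
  induction s using Multiset.induction_on with
  | empty => simp [coeff_one]
  | cons a s ih =>
    rw [Multiset.map_cons, Multiset.prod_cons, sub_mul, one_mul, mul_assoc, coeff_sub, ih,
      coeff_C_mul, coeff_X_mul, aux_coeff_zero, Multiset.sum_cons]
    ring

lemma aux_root_pow {N : Type*} [Fintype N] [DecidableEq N] {M : Matrix N N ℂ} {k : ℕ}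
    (hM : M ^ k = 1) {r : ℂ} (hr : r ∈ M.charpoly.roots) : r ^ k = 1 := by
  have hroot : M.charpoly.IsRoot r := isRoot_of_mem_roots hr
  have hdet : (r • (1 : Matrix N N ℂ) - M).det = 0 := by
    have : ((charmatrix M).map (Polynomial.eval r)) = r • (1 : Matrix N N ℂ) - M := by
      ext i j
      by_cases h : i = j <;>
        simp [charmatrix_apply, h, Matrix.one_apply, Matrix.scalar_apply, Matrix.diagonal_apply]
    rw [← this, show M.charmatrix.map (Polynomial.eval r) = (Polynomial.evalRingHom r).mapMatrix M.charmatrix from rfl, ← RingHom.map_det]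
    exact hroot
  obtain ⟨v, hv0, hv⟩ := (Matrix.exists_mulVec_eq_zero_iff).2 hdet
  have hMv : M.mulVec v = r • v := by
    have := hv
    rw [Matrix.sub_mulVec, sub_eq_zero] at this
    rw [← this, Matrix.smul_mulVec, Matrix.one_mulVec]
  have hpow : ∀ j : ℕ, (M ^ j).mulVec v = r ^ j • v := by
    intro j
    induction j with
    | zero => simp
    | succ j ih =>
      rw [pow_succ, ← Matrix.mulVec_mulVec, hMv, Matrix.mulVec_smul, ih, smul_smul, ← pow_succ']
  have := hpow k
  rw [hM, Matrix.one_mulVec] at this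
  have h2 : (r ^ k - 1) • v = 0 := by rw [sub_smul, one_smul, ← this, sub_self]
  rcases smul_eq_zero.1 h2 with h | h
  · exact sub_eq_zero.1 h
  · exact absurd h hv0

lemma aux_trace_inv {N : Type*} [Fintype N] [DecidableEq N] (M : Matrix N N ℂ) {k : ℕ}
    (hk : k ≠ 0) (hM : M ^ k = 1) : Matrix.trace M⁻¹ = star (Matrix.trace M) := by
  classical
  set R := M.charpoly.roots with hR
  have hsplit : M.charpoly.Splits := IsAlgClosed.splits _
  have hcard : R.card = Fintype.card N := by
    rw [hR, (Polynomial.splits_iff_card_roots).1 hsplit, Matrix.charpoly_natDegree_eq_dim]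
  have hroot : ∀ r ∈ R, r ^ k = 1 := fun r hr => aux_root_pow hM hr
  have hrne : ∀ r ∈ R, r ≠ 0 := by
    intro r hr h0
    have := hroot r hr
    rw [h0, zero_pow hk] at this
    exact zero_ne_one this
  have hstar : ∀ r ∈ R, star r = r⁻¹ := by
    intro r hr
    have habs : ‖r‖ = 1 := by
      have h1 : ‖r‖ ^ k = 1 := by
        rw [← norm_pow, hroot r hr]
        exact norm_one
      rcases lt_trichotomy ‖r‖ 1 with h | h | h
      · exact absurd h1 (ne_of_lt (pow_lt_one₀ (norm_nonneg r) h hk))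
      · exact h
      · exact absurd h1.symm (ne_of_lt (one_lt_pow₀ h hk))
    exact (Complex.inv_eq_conj habs).symm
  have hdet : M.det = R.prod := Matrix.det_eq_prod_roots_charpoly M
  have hdet0 : M.det ≠ 0 := by
    rw [hdet]; exact Multiset.prod_ne_zero (fun h0 => hrne 0 h0 rfl)
  have hfac : M.map C * (1 - (X : ℂ[X]) • M⁻¹.map C) = -(M.charmatrix) := by
    rw [mul_sub, mul_one, Matrix.mul_smul, ← Matrix.map_mul,
      Matrix.mul_nonsing_inv M (isUnit_iff_ne_zero.2 hdet0)]
    ext i j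
    by_cases h : i = j <;>
      simp [Matrix.charmatrix_apply, h, Matrix.one_apply, Matrix.scalar_apply,
        Matrix.diagonal_apply]
  have hdet2 : C M.det * M⁻¹.charpolyRev = (-1 : ℂ[X]) ^ (Fintype.card N) * M.charpoly := by
    have h := congrArg Matrix.det hfac
    rwa [Matrix.det_mul, Matrix.det_neg, show (M.charmatrix).det = M.charpoly from rfl,
      show (1 - (X : ℂ[X]) • M⁻¹.map C).det = M⁻¹.charpolyRev from rfl,
      show (M.map C).det = C M.det from (RingHom.map_det C M).symm] at h
  have hprod : C M.det * M⁻¹.charpolyRev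
      = C M.det * ((R.map (·⁻¹)).map (fun c => 1 - C c * X)).prod := by
    rw [hdet2, hsplit.eq_prod_roots_of_monic M.charpoly_monic, ← hR,
      ← hcard]
    calc (-1 : ℂ[X]) ^ R.card * (R.map fun r => X - C r).prod
        = (R.map fun _ => (-1 : ℂ[X])).prod * (R.map fun r => X - C r).prod := by
          rw [Multiset.map_const', Multiset.prod_replicate]
      _ = (R.map fun r => -1 * (X - C r)).prod := (Multiset.prod_map_mul).symm
      _ = (R.map fun r => C r * (1 - C r⁻¹ * X)).prod := by
          apply congrArg Multiset.prod
          apply Multiset.map_congr rfl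
          intro r hr
          rw [neg_one_mul, neg_sub, mul_sub, mul_one, ← mul_assoc, ← C_mul,
            mul_inv_cancel₀ (hrne r hr), C_1, one_mul]
      _ = (R.map C).prod * (R.map fun r => 1 - C r⁻¹ * X).prod := Multiset.prod_map_mul
      _ = C M.det * ((R.map (·⁻¹)).map (fun c => 1 - C c * X)).prod := by
          rw [Multiset.map_map, hdet, ← Multiset.prod_hom R C]
          rfl
  have hrev : M⁻¹.charpolyRev = ((R.map (·⁻¹)).map (fun c => 1 - C c * X)).prod :=
    mul_left_cancel₀ (by simpa using hdet0) hprod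
  have htr : Matrix.trace M⁻¹ = (R.map (·⁻¹)).sum := by
    have h := Matrix.coeff_charpolyRev_eq_neg_trace M⁻¹
    rw [hrev, aux_coeff_one] at h
    exact (neg_inj.1 h).symm
  have htrM : star (Matrix.trace M) = (R.map (·⁻¹)).sum := by
    rw [Matrix.trace_eq_sum_roots_charpoly, ← hR,
      show (star R.sum : ℂ) = (starRingEnd ℂ) R.sum from rfl, map_multiset_sum]
    apply congrArg Multiset.sum
    exact Multiset.map_congr rfl (fun r hr => hstar r hr)
  rw [htr, htrM]

lemma aux_char_inv {G : Type} [Group G] [Finite G] (V : FDRep ℂ G) (g : G) :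
    FDRep.character V g⁻¹ = star (FDRep.character V g) := by
  classical
  let b := Module.finBasis ℂ V
  have hτ : ∀ h : G, FDRep.character V h = Matrix.trace (LinearMap.toMatrix b b (V.ρ h)) :=
    fun h => LinearMap.trace_eq_matrix_trace ℂ b (V.ρ h)
  set k := orderOf g with hkdef
  have hk : k ≠ 0 := (orderOf_pos g).ne'
  set M := LinearMap.toMatrix b b (V.ρ g) with hMdef
  have hMk : M ^ k = 1 := by
    have h1 : (V.ρ g) ^ k = 1 := by rw [← map_pow, pow_orderOf_eq_one, _root_.map_one]
    rw [hMdef, show LinearMap.toMatrix b b (V.ρ g) = LinearMap.toMatrixAlgEquiv b (V.ρ g) from rfl,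
      ← map_pow, h1, _root_.map_one]
  have hMinv : LinearMap.toMatrix b b (V.ρ g⁻¹) = M⁻¹ := by
    apply (Matrix.inv_eq_right_inv _).symm
    rw [hMdef, show LinearMap.toMatrix b b (V.ρ g) = LinearMap.toMatrixAlgEquiv b (V.ρ g) from rfl,
      show LinearMap.toMatrix b b (V.ρ g⁻¹) = LinearMap.toMatrixAlgEquiv b (V.ρ g⁻¹) from rfl,
      ← _root_.map_mul, ← _root_.map_mul V.ρ, mul_inv_cancel, _root_.map_one, _root_.map_one]
  rw [hτ, hτ, hMinv, aux_trace_inv M hk hMk]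

lemma aux_ambivalent (n : ℕ) (g : QuaternionGroup (2 * n)) :
    ∃ h : QuaternionGroup (2 * n), h * g * h⁻¹ = g⁻¹ := by
  have hm : ((2 * (2 * n) : ℕ) : ZMod (2 * (2 * n))) = 0 := ZMod.natCast_self _
  have hadd : ((2 * n : ℕ) : ZMod (2 * (2 * n))) + ((2 * n : ℕ) : ZMod (2 * (2 * n))) = 0 := by
    rw [← Nat.cast_add, show 2 * n + 2 * n = 2 * (2 * n) by ring, hm]
  obtain i | i := g
  · refine ⟨QuaternionGroup.xa 0, ?_⟩
    rw [show (QuaternionGroup.a i)⁻¹ = QuaternionGroup.a (-i) from rfl,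
      show (QuaternionGroup.xa (0 : ZMod (2 * (2 * n))))⁻¹
        = QuaternionGroup.xa (((2 * n : ℕ) : ZMod (2 * (2 * n))) + 0) from rfl]
    rw [QuaternionGroup.xa_mul_a, QuaternionGroup.xa_mul_xa]
    congr 1
    linear_combination hadd
  · refine ⟨QuaternionGroup.a ((n : ℕ) : ZMod (2 * (2 * n))), ?_⟩
    rw [show (QuaternionGroup.xa i)⁻¹
        = QuaternionGroup.xa (((2 * n : ℕ) : ZMod (2 * (2 * n))) + i) from rfl,
      show (QuaternionGroup.a ((n : ℕ) : ZMod (2 * (2 * n))))⁻¹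
        = QuaternionGroup.a (-((n : ℕ) : ZMod (2 * (2 * n)))) from rfl]
    rw [QuaternionGroup.a_mul_xa, QuaternionGroup.xa_mul_a]
    congr 1
    have h2 : ((2 * n : ℕ) : ZMod (2 * (2 * n)))
        = ((n : ℕ) : ZMod (2 * (2 * n))) + ((n : ℕ) : ZMod (2 * (2 * n))) := by
      rw [← Nat.cast_add]; congr 1; ring
    linear_combination h2 - hadd

end Aux

/-- For every `n ≥ 1`, every irreducible complex character of the dicyclic group
`Dic_{2n}` of order `8n` is real-valued. -/
theorem quaternionGroup_two_mul_character_real (n : ℕ) (hn : 1 ≤ n) :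
    ∀ (V : FDRep ℂ (QuaternionGroup (2 * n))), Simple V →
      ∀ g : QuaternionGroup (2 * n), ∃ r : ℝ, FDRep.character V g = (r : ℂ) := by
  haveI : NeZero (2 * n) := ⟨by omega⟩
  intro V _ g
  obtain ⟨h, hh⟩ := aux_ambivalent n g
  have h1 : FDRep.character V g⁻¹ = FDRep.character V g := by
    rw [← hh, FDRep.char_conj]
  have h2 := aux_char_inv V g
  rw [h1] at h2
  refine ⟨(FDRep.character V g).re, ?_⟩
  exact (Complex.conj_eq_iff_re.1 (by simpa using h2.symm)).symm
end

section
/- Fix a natural number g ≥ 1 and an integer e with e ≠ 1. Let G be the group presented with generators a₁, …, a_g, b₁, …, b_g, h and relations a_i h a_i⁻¹ h⁻¹ = 1 and b_i h b_i⁻¹ h⁻¹ = 1 for each 1 ≤ i ≤ g, together with [a₁,b₁][a₂,b₂]⋯[a_g,b_g] h^{−e} = 1 (this is the fundamental group of the orientable circle bundle of Euler number e over the closed orientable surface of genus g). Then G is not ambivalent. -/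
/-- Generators `a₁, …, a_g, b₁, …, b_g, h` : the `Unit` generator represents `h`. -/
abbrev SeifertGen (g : ℕ) : Type := (Fin g ⊕ Fin g) ⊕ Unit

/-- The generator `aᵢ` in the free group. -/
def genA (g : ℕ) (i : Fin g) : FreeGroup (SeifertGen g) :=
  FreeGroup.of (Sum.inl (Sum.inl i))

/-- The generator `bᵢ` in the free group. -/
def genB (g : ℕ) (i : Fin g) : FreeGroup (SeifertGen g) :=
  FreeGroup.of (Sum.inl (Sum.inr i))

/-- The generator `h` in the free group. -/
def genH (g : ℕ) : FreeGroup (SeifertGen g) :=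
  FreeGroup.of (Sum.inr ())

open scoped commutatorElement

/-- The relators `aᵢ h aᵢ⁻¹ h⁻¹`, `bᵢ h bᵢ⁻¹ h⁻¹` (for `1 ≤ i ≤ g`) and
`[a₁,b₁][a₂,b₂]⋯[a_g,b_g] h^(-e)` of the fundamental group of the orientable circle bundle
of Euler number `e` over the closed orientable surface of genus `g`. -/
def seifertRels (g : ℕ) (e : ℤ) : Set (FreeGroup (SeifertGen g)) :=
  {x | ∃ i : Fin g, x = genA g i * genH g * (genA g i)⁻¹ * (genH g)⁻¹} ∪
  {x | ∃ i : Fin g, x = genB g i * genH g * (genB g i)⁻¹ * (genH g)⁻¹} ∪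
  {((List.finRange g).map (fun i => ⁅genA g i, genB g i⁆)).prod * genH g ^ (-e)}

/-- Map generators to `Multiplicative ℤ`: each `aᵢ ↦ 1`, everything else `↦ 0`. -/
def seifertAb (g : ℕ) : SeifertGen g → Multiplicative ℤ :=
  fun x => match x with
  | Sum.inl (Sum.inl _) => Multiplicative.ofAdd 1
  | _ => 1

lemma seifertAb_rels (g : ℕ) (e : ℤ) :
    ∀ r ∈ seifertRels g e, FreeGroup.lift (seifertAb g) r = 1 := by
  rintro r (( ⟨i, rfl⟩ | ⟨i, rfl⟩ ) | hr)
  · simp [genA, genH, seifertAb, mul_comm, mul_assoc, mul_left_comm]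
  · simp [genB, genH, seifertAb, mul_comm, mul_assoc, mul_left_comm]
  · simp only [Set.mem_singleton_iff] at hr
    subst hr
    rw [map_mul, map_list_prod]
    have h1 : ((List.finRange g).map (fun i => ⁅genA g i, genB g i⁆)).map
        (FreeGroup.lift (seifertAb g)) = List.replicate g 1 := by
      rw [List.map_map]
      rw [List.eq_replicate_iff]
      constructor
      · simp
      · intro b hb
        simp only [List.mem_map] at hb
        obtain ⟨i, -, rfl⟩ := hb
        simp [commutatorElement_def, mul_comm, mul_assoc, mul_left_comm]
    rw [h1]
    simp [genH, seifertAb]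

/-- For `g ≥ 1` and `e ≠ 1`, the fundamental group of the orientable circle bundle of
Euler number `e` over the closed orientable surface of genus `g` is not ambivalent. -/
theorem seifert_fundamental_group_not_ambivalent (g : ℕ) (hg : 1 ≤ g) (e : ℤ) (he : e ≠ 1) :
    ¬ IsAmbivalent (PresentedGroup (seifertRels g e)) := by
  intro H
  have hcl : ∀ r ∈ seifertRels g e, FreeGroup.lift (seifertAb g) r = 1 := seifertAb_rels g e
  let φ : PresentedGroup (seifertRels g e) →* Multiplicative ℤ :=
    PresentedGroup.toGroup hcl
  obtain ⟨h, hh⟩ := H (PresentedGroup.of (Sum.inl (Sum.inl ⟨0, hg⟩)))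
  have := congrArg φ hh
  simp only [map_mul, map_inv] at this
  rw [mul_comm, inv_mul_cancel_left] at this
  rw [show φ (PresentedGroup.of (Sum.inl (Sum.inl ⟨0, hg⟩))) = seifertAb g (Sum.inl (Sum.inl ⟨0, hg⟩)) from PresentedGroup.toGroup.of hcl] at this
  have h2 := congrArg Multiplicative.toAdd this
  simp [seifertAb] at h2
end
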